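/- arXiv:2405.16490 — 2 statements merged into one kernel-verified Lean document; each statement's English description precedes it below -/
import Mathlib

section
/- Any deterministic policy is specifiable: for every deterministic policy π there exists a teleo-environment ε such that π is the unique optimal policy for ε. -/
open scoped ENNReal BigOperators

structure Transducer (I O : Type) [Fintype O] where
  State : Type
  init : State
  out : State → O → ℝ≥0∞
  out_sum : ∀ st, ∑ o, out st o = 1
  step : State → I → O → State

namespace Transducer

variable {I O : Type} [Fintype O]

/-- The transducer evolved by a single input-output pair. -/
def evolve (t : Transducer I O) (i : I) (o : O) : Transducer I O :=
  { t with init := t.step t.init i o }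

def stepSeq (t : Transducer I O) : t.State → List (I × O) → t.State
  | st, [] => st
  | st, p :: rest => t.stepSeq (t.step st p.1 p.2) rest

/-- The transducer evolved along a finite sequence of input-output pairs. -/
def evolveSeq (t : Transducer I O) (l : List (I × O)) : Transducer I O :=
  { t with init := t.stepSeq t.init l }

/-- Induced behaviour: conditional probability of an output sequence given an
input sequence of the same length. -/
noncomputable def beh : Transducer I O → List I → List O → ℝ≥0∞
  | _, [], [] => 1
  | t, i :: is, o :: os => t.out t.init o * beh (t.evolve i o) is os
  | _, _, _ => 0

/-- Behavioural equality of transducers. -/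
def BehEq (t u : Transducer I O) : Prop :=
  ∀ is os, t.beh is os = u.beh is os

/-- States reachable from the initial state along possible transitions. -/
inductive Reachable (t : Transducer I O) : t.State → Prop
  | init : Reachable t t.init
  | step {st : t.State} (i : I) (o : O) :
      Reachable t st → t.out st o ≠ 0 → Reachable t (t.step st i o)

/-- A transducer is deterministic if every reachable output distribution is a
point mass. -/
def Deterministic (t : Transducer I O) : Prop :=
  ∀ st, t.Reachable st → ∃ o, t.out st o = 1

end Transducer

/-- A policy: a transducer from sensor values to actions. -/
abbrev Policy (S A : Type) [Fintype A] := Transducer S A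

/-- A teleo-environment: a transducer from actions to pairs of a sensor value
and a success signal (`true` = success ⊤, `false` = ⊥). -/
abbrev Env (S A : Type) [Fintype S] := Transducer A (S × Bool)

section Value

variable {S A : Type} [Fintype S] [Fintype A]

/-- Probability that success occurs at least once within the first `n` steps of
the coupled process of a policy and a teleo-environment. -/
noncomputable def succProb : ℕ → Policy S A → Env S A → ℝ≥0∞
  | 0, _, _ => 0
  | n + 1, π, ε =>
      ∑ a : A, ∑ p : S × Bool,
        π.out π.init a * ε.out ε.init p *
          (if p.2 then 1 else succProb n (π.evolve p.1 a) (ε.evolve a p))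

/-- The value of a policy in a teleo-environment: the probability that success
occurs at least once in the coupled process. -/
noncomputable def value (π : Policy S A) (ε : Env S A) : ℝ≥0∞ :=
  ⨆ n, succProb n π ε

/-- A policy is optimal for a teleo-environment if its value is maximal among
all policies. -/
def Optimal (π : Policy S A) (ε : Env S A) : Prop :=
  ∀ π' : Policy S A, value π' ε ≤ value π ε

/-- A policy is uniquely optimal if it is optimal and every optimal policy is
behaviourally equal to it. -/
def UniquelyOptimal (π : Policy S A) (ε : Env S A) : Prop :=
  Optimal π ε ∧ ∀ π' : Policy S A, Optimal π' ε → π'.BehEq π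

/-- Probability of a finite interaction history (action, sensor value, success
signal per step) in the coupled process. -/
noncomputable def trajProbG : Policy S A → Env S A → List ((A × S) × Bool) → ℝ≥0∞
  | _, _, [] => 1
  | π, ε, (p, g) :: rest =>
      π.out π.init p.1 * ε.out ε.init (p.2, g) *
        trajProbG (π.evolve p.2 p.1) (ε.evolve p.1 (p.2, g)) rest

/-- A finite action-sensor history occurs with positive probability in the
coupled process (marginalising over the unobserved success signals). -/
def PosProb (π : Policy S A) (ε : Env S A) (h : List (A × S)) : Prop :=
  ∃ l : List ((A × S) × Bool), l.map Prod.fst = h ∧ trajProbG π ε l ≠ 0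

/-- The policy evolved along an action-sensor history (inputs are the sensor
values, outputs the actions). -/
def Policy.evolveBy (π : Policy S A) (h : List (A × S)) : Policy S A :=
  Transducer.evolveSeq π (h.map fun p => (p.2, p.1))

/-- Value-laden filtering: the environment evolved along the actions and sensor
values, with every success signal set to ⊥ (no success). -/
def Env.vlEvolveBy (ε : Env S A) (h : List (A × S)) : Env S A :=
  Transducer.evolveSeq ε (h.map fun p => (p.1, (p.2, false)))

end Value

/-! The specifying environment `followEnv` runs a copy of the state machine of `π`. As long as
the agent has played exactly the actions of `π`, each step emits a uniformly random sensor value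
and succeeds with probability `1/2`; the first deviation leads to a dead state that never
succeeds. Following `π` therefore succeeds almost surely, and since every sensor history survives
with positive probability, a policy of value `1` must play the action of `π` with probability `1`
after every history. -/

namespace Transducer

variable {I O : Type} [Fintype O]

def withInit (t : Transducer I O) (st : t.State) : Transducer I O :=
  { t with init := st }

@[simp]
theorem withInit_init (t : Transducer I O) (st : t.State) : (t.withInit st).init = st :=
  rfl

@[simp]
theorem withInit_out (t : Transducer I O) (st : t.State) : (t.withInit st).out = t.out :=
  rfl

theorem out_eq_zero_of_out_eq_one (t : Transducer I O) {st : t.State} {o o' : O}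
    (h : t.out st o = 1) (ho : o' ≠ o) : t.out st o' = 0 := by
  classical
  have hsum := t.out_sum st
  rw [← Finset.add_sum_erase _ _ (Finset.mem_univ o), h] at hsum
  have hrest : ∑ x ∈ Finset.univ.erase o, t.out st x = 0 :=
    (ENNReal.add_right_inj ENNReal.one_ne_top).mp (by rw [hsum, add_zero])
  exact Finset.sum_eq_zero_iff.mp hrest o' (Finset.mem_erase.mpr ⟨ho, Finset.mem_univ o'⟩)

theorem behEq_of_forall_out_eq_one (R : Transducer I O → Transducer I O → Prop)
    (hR : ∀ t u, R t u → ∃ o, t.out t.init o = 1 ∧ u.out u.init o = 1 ∧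
      ∀ i, R (t.evolve i o) (u.evolve i o))
    {t u : Transducer I O} (htu : R t u) : t.BehEq u := by
  intro is
  induction is generalizing t u with
  | nil => intro os; cases os <;> rfl
  | cons i is ih =>
    intro os
    cases os with
    | nil => rfl
    | cons o' os =>
      obtain ⟨o, ht, hu, hnext⟩ := hR t u htu
      show t.out t.init o' * (t.evolve i o').beh is os =
        u.out u.init o' * (u.evolve i o').beh is os
      by_cases ho : o' = o
      · subst ho
        rw [ht, hu, ih (hnext i)]
      · rw [t.out_eq_zero_of_out_eq_one ht ho, u.out_eq_zero_of_out_eq_one hu ho, zero_mul,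
          zero_mul]

end Transducer

namespace ENNReal

theorem eq_one_of_sum_mul_eq_one {ι : Type} [Fintype ι] {w x : ι → ℝ≥0∞}
    (hw : ∑ i, w i = 1) (hx : ∀ i, x i ≤ 1) (h : ∑ i, w i * x i = 1) {i : ι}
    (hwi : w i ≠ 0) : x i = 1 := by
  have hdefect : ∑ j, w j * (1 - x j) = 0 := by
    have hsplit : ∑ j, w j * x j + ∑ j, w j * (1 - x j) = 1 := by
      simp only [← Finset.sum_add_distrib, ← mul_add, add_tsub_cancel_of_le (hx _), mul_one, hw]
    rw [h] at hsplit
    exact (ENNReal.add_right_inj ENNReal.one_ne_top).mp (by rw [hsplit, add_zero])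
  have hi := Finset.sum_eq_zero_iff.mp hdefect i (Finset.mem_univ i)
  exact le_antisymm (hx i) (tsub_eq_zero_iff_le.mp ((mul_eq_zero.mp hi).resolve_left hwi))

theorem one_le_of_half_mul_add_one_le {m : ℝ≥0∞} (hm : m ≠ ⊤) (h : 2⁻¹ * (m + 1) ≤ m) :
    1 ≤ m := by
  have h2 : 2⁻¹ * 1 ≤ 2⁻¹ * m := by
    refine ENNReal.le_of_add_le_add_left (a := 2⁻¹ * m) (ENNReal.mul_ne_top (by simp) hm) ?_
    calc 2⁻¹ * m + 2⁻¹ * 1 = 2⁻¹ * (m + 1) := (mul_add _ _ _).symm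
      _ ≤ m := h
      _ = 2⁻¹ * m + 2⁻¹ * m := by rw [← add_mul, ENNReal.inv_two_add_inv_two, one_mul]
  exact (ENNReal.mul_le_mul_iff_right (by simp) (by simp)).mp h2

end ENNReal

section Value

variable {S A : Type} [Fintype S] [Fintype A]

theorem succProb_le_succ (n : ℕ) (ρ : Policy S A) (ε : Env S A) :
    succProb n ρ ε ≤ succProb (n + 1) ρ ε := by
  induction n generalizing ρ ε with
  | zero => exact zero_le
  | succ n ih =>
    rw [succProb, succProb]
    gcongr with a _ p _
    split
    · exact le_rfl
    · exact ih _ _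

theorem succProb_monotone (ρ : Policy S A) (ε : Env S A) :
    Monotone fun n => succProb n ρ ε :=
  monotone_nat_of_le_succ fun n => succProb_le_succ n ρ ε

theorem sum_sum_out_mul_out (ρ : Policy S A) (ε : Env S A) :
    ∑ a, ∑ p, ρ.out ρ.init a * ε.out ε.init p = 1 := by
  rw [← Finset.sum_mul_sum, ρ.out_sum, ε.out_sum, one_mul]

theorem succProb_le_one (n : ℕ) (ρ : Policy S A) (ε : Env S A) : succProb n ρ ε ≤ 1 := by
  induction n generalizing ρ ε with
  | zero => exact zero_le
  | succ n ih =>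
    calc succProb (n + 1) ρ ε ≤ ∑ a, ∑ p, ρ.out ρ.init a * ε.out ε.init p * 1 := by
          rw [succProb]
          gcongr with a _ p _
          split
          · exact le_rfl
          · exact ih _ _
      _ = 1 := by simp only [mul_one, sum_sum_out_mul_out]

theorem value_le_one (ρ : Policy S A) (ε : Env S A) : value ρ ε ≤ 1 :=
  iSup_le fun n => succProb_le_one n ρ ε

theorem value_eq_sum (ρ : Policy S A) (ε : Env S A) :
    value ρ ε = ∑ a, ∑ p, ρ.out ρ.init a * ε.out ε.init p *
      (if p.2 then 1 else value (ρ.evolve p.1 a) (ε.evolve a p)) := by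
  have hmono : ∀ a p, Monotone fun n => ρ.out ρ.init a * ε.out ε.init p *
      (if p.2 then 1 else succProb n (ρ.evolve p.1 a) (ε.evolve a p)) := by
    intro a p m n hmn
    dsimp only
    gcongr
    split
    · exact le_rfl
    · exact succProb_monotone _ _ hmn
  calc value ρ ε = ⨆ n, succProb (n + 1) ρ ε :=
        ((succProb_monotone ρ ε).iSup_nat_add 1).symm
    _ = ∑ a, ∑ p, ⨆ n, ρ.out ρ.init a * ε.out ε.init p *
          (if p.2 then 1 else succProb n (ρ.evolve p.1 a) (ε.evolve a p)) := by
        simp only [succProb, ENNReal.finsetSum_iSup_of_monotone (hmono _)]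
        rw [ENNReal.finsetSum_iSup_of_monotone fun a m n hmn =>
          Finset.sum_le_sum fun p _ => hmono a p hmn]
    _ = _ := by
        congr! 3 with a p
        rw [← ENNReal.mul_iSup]
        split
        · exact congrArg _ iSup_const
        · rfl

end Value

section Follow

variable {S A : Type} [Fintype S] [Nonempty S] {σ : Type}

theorem sum_inv_card : ∑ _s : S, (Fintype.card S : ℝ≥0∞)⁻¹ = 1 := by
  rw [Finset.sum_const, Finset.card_univ, nsmul_eq_mul]
  exact ENNReal.mul_inv_cancel (Nat.cast_ne_zero.mpr Fintype.card_ne_zero)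
    (ENNReal.natCast_ne_top _)

noncomputable def followOut : Option σ → S × Bool → ℝ≥0∞
  | some _, _ => (Fintype.card S : ℝ≥0∞)⁻¹ * 2⁻¹
  | none, p => if p.2 then 0 else (Fintype.card S : ℝ≥0∞)⁻¹

theorem followOut_sum (x : Option σ) : ∑ p, followOut (S := S) x p = 1 := by
  rw [Fintype.sum_prod_type]
  cases x with
  | none => simpa [followOut] using sum_inv_card
  | some q =>
    simp only [followOut, Fintype.sum_bool, ← mul_add, ENNReal.inv_two_add_inv_two, mul_one]
    exact sum_inv_card

open Classical in
noncomputable def followStep (step : σ → S → A → σ) (f : σ → A) :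
    Option σ → A → S × Bool → Option σ
  | some q, a, p => if a = f q then some (step q p.1 a) else none
  | none, _, _ => none

noncomputable def followEnv (step : σ → S → A → σ) (f : σ → A) (x : Option σ) : Env S A where
  State := Option σ
  init := x
  out := followOut
  out_sum := followOut_sum
  step := followStep step f

variable (step : σ → S → A → σ) (f : σ → A)

theorem followEnv_evolve (x : Option σ) (a : A) (p : S × Bool) :
    (followEnv step f x).evolve a p = followEnv step f (followStep step f x a p) :=
  rfl

variable [Fintype A]

theorem value_followEnv_none (ρ : Policy S A) : value ρ (followEnv step f none) = 0 := by
  refine ENNReal.iSup_eq_zero.mpr fun n => ?_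
  induction n generalizing ρ with
  | zero => rfl
  | succ n ih =>
    refine Finset.sum_eq_zero fun a _ => Finset.sum_eq_zero fun p _ => ?_
    rcases p with ⟨s, _ | _⟩
    · exact mul_eq_zero_of_right _ (ih _)
    · exact mul_eq_zero_of_left (mul_eq_zero_of_right _ rfl) _

open Classical in
theorem value_followEnv_some (ρ : Policy S A) (q : σ) :
    value ρ (followEnv step f (some q)) = ∑ a, ∑ p : S × Bool,
      ρ.out ρ.init a * ((Fintype.card S : ℝ≥0∞)⁻¹ * 2⁻¹) *
        (if p.2 then 1 else
          if a = f q then value (ρ.evolve p.1 a) (followEnv step f (some (step q p.1 a)))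
          else 0) := by
  classical
  rw [value_eq_sum]
  refine Finset.sum_congr rfl fun a _ => Finset.sum_congr rfl fun p _ => ?_
  congr 2
  rw [followEnv_evolve]
  by_cases ha : a = f q
  · simp [followStep, ha]
  · simp [followStep, ha, value_followEnv_none]

theorem out_eq_one_and_value_eq_one_of_value_followEnv_eq_one (ρ : Policy S A) (q : σ)
    (h : value ρ (followEnv step f (some q)) = 1) :
    ρ.out ρ.init (f q) = 1 ∧
      ∀ s, value (ρ.evolve s (f q)) (followEnv step f (some (step q s (f q)))) = 1 := by
  classical
  rw [value_followEnv_some, ← Fintype.sum_prod_type'] at h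
  have hu : (Fintype.card S : ℝ≥0∞)⁻¹ * 2⁻¹ ≠ 0 := by simp
  have hw : ∑ x : A × (S × Bool),
      ρ.out ρ.init x.1 * ((Fintype.card S : ℝ≥0∞)⁻¹ * 2⁻¹) = 1 := by
    rw [Fintype.sum_prod_type]
    exact sum_sum_out_mul_out ρ (followEnv step f (some q))
  have hx : ∀ x : A × (S × Bool), (if x.2.2 then 1 else if x.1 = f q then
      value (ρ.evolve x.2.1 x.1) (followEnv step f (some (step q x.2.1 x.1))) else 0) ≤ 1 := by
    intro x
    split_ifs
    exacts [le_rfl, value_le_one _ _, zero_le]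
  obtain ⟨s₀⟩ := ‹Nonempty S›
  have hwrong : ∀ a, a ≠ f q → ρ.out ρ.init a = 0 := by
    intro a ha
    by_contra hne
    have := ENNReal.eq_one_of_sum_mul_eq_one hw hx h (i := (a, s₀, false)) (mul_ne_zero hne hu)
    simp [ha] at this
  have hright : ρ.out ρ.init (f q) = 1 := by
    rw [← ρ.out_sum, Finset.sum_eq_single (f q) (fun a _ => hwrong a) (by simp)]
  refine ⟨hright, fun s => ?_⟩
  have := ENNReal.eq_one_of_sum_mul_eq_one hw hx h (i := (f q, s, false)) (by simp [hright])
  simpa using this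

end Follow

/-- The infimum `m` of these values over the reachable states satisfies `(1 + m) / 2 ≤ m`,
which forces `m = 1`. -/
theorem value_followEnv_eq_one {S A : Type} [Fintype S] [Fintype A] [Nonempty S]
    {π : Policy S A} {f : π.State → A}
    (hf : ∀ st, π.Reachable st → π.out st (f st) = 1) {st : π.State} (hst : π.Reachable st) :
    value (π.withInit st) (followEnv π.step f (some st)) = 1 := by
  set m := ⨅ (st) (_ : π.Reachable st), value (π.withInit st) (followEnv π.step f (some st))
  have hm_le : m ≤ value (π.withInit st) (followEnv π.step f (some st)) := iInf₂_le st hst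
  suffices 1 ≤ m from le_antisymm (value_le_one _ _) (this.trans hm_le)
  have hbellman : ∀ st, π.Reachable st →
      2⁻¹ * (m + 1) ≤ value (π.withInit st) (followEnv π.step f (some st)) := by
    intro st hst
    have hnext : ∀ s, m ≤ value ((π.withInit st).evolve s (f st))
        (followEnv π.step f (some (π.step st s (f st)))) :=
      fun s => iInf₂_le _ (.step s _ hst (by simp [hf st hst]))
    rw [value_followEnv_some, Finset.sum_eq_single (f st)
      (fun a _ ha => by simp [π.out_eq_zero_of_out_eq_one (hf st hst) ha]) (by simp)]
    calc 2⁻¹ * (m + 1)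
        = ∑ p : S × Bool, (Fintype.card S : ℝ≥0∞)⁻¹ * 2⁻¹ * (if p.2 then 1 else m) := by
          simp only [Fintype.sum_prod_type, Fintype.sum_bool, if_true, Bool.false_eq_true,
            if_false, ← mul_add, ← Finset.sum_mul, sum_inv_card, one_mul, add_comm]
      _ ≤ _ := by
          refine Finset.sum_le_sum fun p _ => ?_
          rw [Transducer.withInit_init, Transducer.withInit_out, hf st hst, one_mul, if_pos rfl]
          gcongr
          split
          · exact le_rfl
          · exact hnext _
  exact ENNReal.one_le_of_half_mul_add_one_le
    (ne_top_of_le_ne_top ENNReal.one_ne_top (hm_le.trans (value_le_one _ _)))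
    (le_iInf₂ hbellman)

/-- **Deterministic policies are specifiable.** For every deterministic policy
`π` there exists a teleo-environment for which `π` is uniquely optimal (optimal,
and every optimal policy is behaviourally equal to `π`). -/
theorem deterministic_implies_specifiable
    {S A : Type} [Fintype S] [Fintype A] [Nonempty S] [Nonempty A]
    (π : Policy S A) (hdet : π.Deterministic) :
    ∃ ε : Env S A, UniquelyOptimal π ε := by
  set f : π.State → A := fun st => Classical.epsilon fun a => π.out st a = 1
  have hf : ∀ st, π.Reachable st → π.out st (f st) = 1 :=
    fun st hst => Classical.epsilon_spec (hdet st hst)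
  have hπ : value π (followEnv π.step f (some π.init)) = 1 := value_followEnv_eq_one hf .init
  refine ⟨followEnv π.step f (some π.init), fun π' => hπ ▸ value_le_one _ _, fun π' hopt => ?_⟩
  refine Transducer.behEq_of_forall_out_eq_one
    (fun ρ τ => ∃ st, π.Reachable st ∧ τ = π.withInit st ∧
      value ρ (followEnv π.step f (some st)) = 1)
    ?_ ⟨π.init, .init, rfl, le_antisymm (value_le_one _ _) (hπ ▸ hopt π)⟩
  rintro ρ _ ⟨st, hst, rfl, hρ⟩
  obtain ⟨hout, hnext⟩ := out_eq_one_and_value_eq_one_of_value_followEnv_eq_one _ f ρ st hρ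
  exact ⟨f st, hout, hf st hst, fun s =>
    ⟨_, .step s _ hst (by simp [hf st hst]), rfl, hnext s⟩⟩
end

section
/- The supremum of values over all policies in a teleo-environment ε (the optimal value of ε) satisfies: optimal value of ε = max over deterministic first actions a of [P(success this step given a) + P(no success this step given a) · E over s of optimal value of ε evolved by (a, (s, ⊥)) conditioned on no success]. -/
open scoped ENNReal BigOperators

/-- The optimal value of a teleo-environment: the supremum of values over all
policies. -/
noncomputable def optValue {S A : Type} [Fintype S] [Fintype A]
    (ε : Env S A) : ℝ≥0∞ :=
  ⨆ π : Policy S A, value π ε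

/-
Both inequalities come from unrolling one step of the coupled process. A policy's first move is a
mixture of actions, after each of which it continues as some policy in the evolved environment, so
its value is at most the best Q-value. Conversely, for a first action `a` and continuation policies
`g s`, one for each no-success outcome `(s, ⊥)`, the policy that plays `a` and then runs `g s` has
value equal to the Q-value expression with `value (g s)` in place of the optimal values; as there
are finitely many sensor values, the suprema over the `g s` can be taken jointly.
-/

theorem ENNReal.sum_iSup_eq_iSup_pi {ι κ : Type*} (s : Finset ι) (f : ι → κ → ℝ≥0∞) :
    ∑ i ∈ s, ⨆ j, f i j = ⨆ g : ι → κ, ∑ i ∈ s, f i (g i) := by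
  classical
  refine le_antisymm ?_ (iSup_le fun g => Finset.sum_le_sum fun i _ => le_iSup (f i) (g i))
  induction s using Finset.cons_induction with
  | empty => simp
  | cons i s hi ih =>
    rcases isEmpty_or_nonempty κ with hκ | hκ
    · simp
    rw [Finset.sum_cons]
    refine (add_le_add_right ih _).trans (ENNReal.iSup_add_iSup_le fun j g => ?_)
    refine le_iSup_of_le (Function.update g i j) (le_of_eq ?_)
    rw [Finset.sum_cons, Function.update_self]
    congr 1
    exact Finset.sum_congr rfl fun i' hi' => by
      rw [Function.update_of_ne (by rintro rfl; exact hi hi')]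

theorem Fintype.sum_mul_ite_snd {S : Type*} [Fintype S] (w V : S × Bool → ℝ≥0∞) :
    ∑ p, w p * (if p.2 then 1 else V p) = ∑ s, w (s, true) + ∑ s, w (s, false) * V (s, false) := by
  rw [Fintype.sum_prod_type, ← Finset.sum_add_distrib]
  exact Finset.sum_congr rfl fun s _ => by simp [add_comm]

section Bellman

variable {S A : Type} [Fintype S] [Fintype A]

noncomputable def optQValue (ε : Env S A) (a : A) : ℝ≥0∞ :=
  ∑ p : S × Bool, ε.out ε.init p * (if p.2 then 1 else optValue (ε.evolve a p))

theorem succProb_succ_eq_sum (n : ℕ) (π : Policy S A) (ε : Env S A) :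
    succProb (n + 1) π ε = ∑ a, π.out π.init a * ∑ p : S × Bool, ε.out ε.init p *
      (if p.2 then 1 else succProb n (π.evolve p.1 a) (ε.evolve a p)) := by
  simp only [succProb, Finset.mul_sum, mul_assoc]

theorem succProb_le_succProb_succ (n : ℕ) (π : Policy S A) (ε : Env S A) :
    succProb n π ε ≤ succProb (n + 1) π ε := by
  induction n generalizing π ε with
  | zero => exact zero_le
  | succ n ih =>
    rw [succProb_succ_eq_sum, succProb_succ_eq_sum]
    gcongr with a _ p _
    split_ifs
    exacts [le_rfl, ih _ _]

theorem monotone_succProb (π : Policy S A) (ε : Env S A) :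
    Monotone fun n => succProb n π ε :=
  monotone_nat_of_le_succ fun n => succProb_le_succProb_succ n π ε

theorem succProb_le_optValue (n : ℕ) (π : Policy S A) (ε : Env S A) :
    succProb n π ε ≤ optValue ε :=
  (le_iSup (fun n => succProb n π ε) n).trans (le_iSup (fun π => value π ε) π)

theorem value_le_iSup_optQValue (π : Policy S A) (ε : Env S A) :
    value π ε ≤ ⨆ a, optQValue ε a := by
  refine iSup_le fun n => ?_
  cases n with
  | zero => exact zero_le
  | succ n =>
    calc succProb (n + 1) π ε ≤ ∑ a, π.out π.init a * optQValue ε a := by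
          rw [succProb_succ_eq_sum]
          unfold optQValue
          gcongr with a _ p _
          split_ifs
          exacts [le_rfl, succProb_le_optValue _ _ _]
      _ ≤ ∑ a, π.out π.init a * ⨆ a, optQValue ε a := by
          gcongr with a _
          exact le_iSup (optQValue ε) a
      _ = ⨆ a, optQValue ε a := by rw [← Finset.sum_mul, π.out_sum, one_mul]

theorem succProb_eq_of_hom (n : ℕ) (π π' : Policy S A) (f : π.State → π'.State)
    (hout : ∀ st, π'.out (f st) = π.out st)
    (hstep : ∀ st s a, f (π.step st s a) = π'.step (f st) s a)
    (hinit : f π.init = π'.init) (ε : Env S A) :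
    succProb n π ε = succProb n π' ε := by
  induction n generalizing π π' ε with
  | zero => rfl
  | succ n ih =>
    refine Finset.sum_congr rfl fun a _ => Finset.sum_congr rfl fun p _ => ?_
    rw [← hinit, hout]
    congr 1
    split_ifs
    · rfl
    · exact ih (π.evolve p.1 a) (π'.evolve p.1 a) f hout hstep
        (show f (π.step π.init p.1 a) = π'.step π'.init p.1 a by rw [hstep, hinit]) _

open Classical in
/-- The policy that plays `a` and then, after observing `s`, behaves as `g s`. -/
noncomputable def Policy.playThen (a : A) (g : S → Policy S A) : Policy S A where
  State := Option (Σ s, (g s).State)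
  init := none
  out
    | none, a' => if a' = a then 1 else 0
    | some x, a' => (g x.1).out x.2 a'
  out_sum
    | none => by simp
    | some x => (g x.1).out_sum x.2
  step
    | none, s, _ => some ⟨s, (g s).init⟩
    | some x, s, a' => some ⟨x.1, (g x.1).step x.2 s a'⟩

theorem succProb_succ_playThen (n : ℕ) (a : A) (g : S → Policy S A) (ε : Env S A) :
    succProb (n + 1) (Policy.playThen a g) ε = ∑ p : S × Bool, ε.out ε.init p *
      (if p.2 then 1 else succProb n (g p.1) (ε.evolve a p)) := by
  classical
  rw [succProb_succ_eq_sum, Finset.sum_eq_single a]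
  · rw [show (Policy.playThen a g).out (Policy.playThen a g).init a = 1 from if_pos rfl, one_mul]
    refine Finset.sum_congr rfl fun p _ => ?_
    congr 2
    exact (succProb_eq_of_hom n (g p.1) _ (fun st => some ⟨p.1, st⟩)
      (fun _ => rfl) (fun _ _ _ => rfl) rfl _).symm
  · intro a' _ ha'
    simp [Policy.playThen, ha']
  · simp

theorem value_playThen (a : A) (g : S → Policy S A) (ε : Env S A) :
    value (Policy.playThen a g) ε = ∑ s, ε.out ε.init (s, true) +
      ∑ s, ε.out ε.init (s, false) * value (g s) (ε.evolve a (s, false)) := by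
  simp only [value, ENNReal.mul_iSup]
  rw [← (monotone_succProb _ ε).iSup_nat_add 1, ENNReal.finsetSum_iSup_of_monotone
    fun s _ _ hmn => by gcongr; exact monotone_succProb _ _ hmn, ENNReal.add_iSup]
  simp only [succProb_succ_playThen, Fintype.sum_mul_ite_snd]

instance [Nonempty A] : Nonempty (Policy S A) := by
  classical
  exact ⟨{ State := Unit, init := (), out := fun _ => Pi.single (Classical.arbitrary A) 1
           out_sum := fun _ => by simp, step := fun _ _ _ => () }⟩

theorem optQValue_le_optValue (ε : Env S A) (a : A) : optQValue ε a ≤ optValue ε := by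
  have : Nonempty A := ⟨a⟩
  rw [optQValue, Fintype.sum_mul_ite_snd]
  simp only [optValue, ENNReal.mul_iSup, ENNReal.sum_iSup_eq_iSup_pi, ENNReal.add_iSup]
  refine iSup_le fun g => ?_
  rw [← value_playThen]
  exact le_iSup (fun π => value π ε) _

end Bellman

theorem optValue_bellman_recursion_general
    {S A : Type} [Fintype S] [Fintype A] (ε : Env S A) :
    optValue ε =
      ⨆ a : A, ∑ p : S × Bool,
        ε.out ε.init p * (if p.2 then 1 else optValue (ε.evolve a p)) :=
  le_antisymm (iSup_le fun π => value_le_iSup_optQValue π ε)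
    (iSup_le (optQValue_le_optValue ε))

/-- **Bellman recursion for the optimal value.** The optimal value of a
teleo-environment `ε` equals the maximum over deterministic first actions `a`
of the probability of success this step plus, for each no-success outcome
`(s, ⊥)`, its probability times the optimal value of `ε` evolved by
`(a, (s, ⊥))` (i.e. conditioned on no success). -/
theorem optValue_bellman_recursion
    {S A : Type} [Fintype S] [Fintype A] [Nonempty A] (ε : Env S A) :
    optValue ε =
      ⨆ a : A, ∑ p : S × Bool,
        ε.out ε.init p * (if p.2 then 1 else optValue (ε.evolve a p)) :=
  optValue_bellman_recursion_general ε
end
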